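/- arXiv:2212.04187 — 2 statements merged into one kernel-verified Lean document; each statement's English description precedes it below -/
import Mathlib

section
/- Assume the non-parallel condition (NP): A e_i ≠ η A e_j for all indices i ≠ j and all η ∈ ℝ. Let x* ∈ ℝⁿ with support J = supp(x*), and assume the projections of distinct support basis vectors have disjoint supports: supp(P e_j) ∩ supp(P e_k) = ∅ for all j, k ∈ J with j ≠ k. Then x* is the unique minimizer of the weighted ℓ1 norm ‖W x‖₁ = Σ_{i=1}^n w_i |x_i| over all x ∈ ℝⁿ satisfying A x = A x*. -/
open scoped RealInnerProductSpace Classical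

/-- The `i`-th standard basis vector of `ℝⁿ`. -/
noncomputable def stdBasis (n : ℕ) (i : Fin n) : EuclideanSpace ℝ (Fin n) :=
  EuclideanSpace.single i 1

/-- `P`: the orthogonal projection of `ℝⁿ` onto the orthogonal complement of `ker A`
(this equals `A†A` for the Moore–Penrose pseudoinverse `A†`). -/
noncomputable def proj {m n : ℕ} (A : EuclideanSpace ℝ (Fin n) →ₗ[ℝ] EuclideanSpace ℝ (Fin m))
    (x : EuclideanSpace ℝ (Fin n)) : EuclideanSpace ℝ (Fin n) :=
  (Submodule.orthogonalProjectionOnto (LinearMap.ker A)ᗮ x : EuclideanSpace ℝ (Fin n))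

/-- The weights `w i = ‖P e_i‖₂`. -/
noncomputable def wgt {m n : ℕ} (A : EuclideanSpace ℝ (Fin n) →ₗ[ℝ] EuclideanSpace ℝ (Fin m))
    (i : Fin n) : ℝ :=
  ‖proj A (stdBasis n i)‖

/-- The weighted ℓ¹ norm `‖W x‖₁ = ∑ i, w i * |x i|`. -/
noncomputable def wl1 {m n : ℕ} (A : EuclideanSpace ℝ (Fin n) →ₗ[ℝ] EuclideanSpace ℝ (Fin m))
    (x : EuclideanSpace ℝ (Fin n)) : ℝ :=
  ∑ i, wgt A i * |x i|

/-!
Dual certificate: `u = ∑_{j ∈ supp x*} (sign x*_j / w_j) • P e_j` lies in `(ker A)ᗮ`, so it is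
orthogonal to every feasible direction `x - x*`. As `(P e_k)_k = w_k² ≠ 0`, disjointness of the
supports of the `P e_j` gives `u_k = sign x*_k · w_k` on `supp x*`, while off `supp x*` at most one
term survives and `|u_i| < w_i` by strict Cauchy–Schwarz: equality would make `P e_i ∥ P e_j`,
i.e. `A e_i ∥ A e_j`, against (NP). Hence `‖W x‖₁ = ‖W x*‖₁ + ∑ (w_i |x_i| - u_i x_i)` with
nonnegative slack, and a minimizer has zero slack, so it vanishes off `supp x*`. There `A` is
injective, since pairing a kernel vector `h` with `P e_j` isolates `w_j² h_j`.
-/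

theorem mul_le_mul_abs_of_abs_le {a b t : ℝ} (h : |a| ≤ b) : a * t ≤ b * |t| :=
  calc a * t ≤ |a| * |t| := by rw [← abs_mul]; exact le_abs_self _
    _ ≤ b * |t| := by gcongr

theorem mul_lt_mul_abs_of_abs_lt {a b t : ℝ} (h : |a| < b) (ht : t ≠ 0) : a * t < b * |t| :=
  calc a * t ≤ |a| * |t| := by rw [← abs_mul]; exact le_abs_self _
    _ < b * |t| := by gcongr

theorem SignType.abs_coe_le_one (s : SignType) : |(s : ℝ)| ≤ 1 := by
  cases s <;> simp

theorem Finset.sum_eq_of_ne_zero_of_pairwise {ι M : Type*} [AddCommMonoid M] {s : Finset ι}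
    {f : ι → M} (hf : ∀ j ∈ s, ∀ k ∈ s, j ≠ k → f j = 0 ∨ f k = 0) {j : ι} (hj : j ∈ s)
    (hfj : f j ≠ 0) : ∑ i ∈ s, f i = f j :=
  Finset.sum_eq_single_of_mem j hj fun k hk hkj => (hf k hk j hj hkj).resolve_right hfj

theorem EuclideanSpace.sum_mul_eq_zero_of_mem_orthogonal {ι : Type*} [Fintype ι]
    {K : Submodule ℝ (EuclideanSpace ℝ ι)} {u h : EuclideanSpace ℝ ι} (hu : u ∈ Kᗮ) (hh : h ∈ K) :
    ∑ i, u i * h i = 0 := by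
  have := Submodule.inner_left_of_mem_orthogonal hh hu
  simpa [PiLp.inner_apply, mul_comm] using this

section DualCertificate

variable {ι : Type*} [Fintype ι] {w u x₀ x : ι → ℝ}

theorem sum_mul_abs_eq_add_sum_sub (halign : ∀ i, u i * x₀ i = w i * |x₀ i|)
    (horth : ∑ i, u i * (x i - x₀ i) = 0) :
    ∑ i, w i * |x i| = ∑ i, w i * |x₀ i| + ∑ i, (w i * |x i| - u i * x i) := by
  simp only [mul_sub, Finset.sum_sub_distrib, sub_eq_zero, halign] at horth ⊢
  linarith

theorem sum_mul_abs_le_of_dual (hu : ∀ i, |u i| ≤ w i) (halign : ∀ i, u i * x₀ i = w i * |x₀ i|)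
    (horth : ∑ i, u i * (x i - x₀ i) = 0) :
    ∑ i, w i * |x₀ i| ≤ ∑ i, w i * |x i| := by
  rw [sum_mul_abs_eq_add_sum_sub halign horth, le_add_iff_nonneg_right]
  exact Finset.sum_nonneg fun i _ => sub_nonneg.2 (mul_le_mul_abs_of_abs_le (hu i))

theorem eq_zero_of_sum_mul_abs_le_of_dual (hu : ∀ i, |u i| ≤ w i)
    (halign : ∀ i, u i * x₀ i = w i * |x₀ i|) (horth : ∑ i, u i * (x i - x₀ i) = 0)
    (hle : ∑ i, w i * |x i| ≤ ∑ i, w i * |x₀ i|) {i : ι} (hi : |u i| < w i) : x i = 0 := by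
  have hslack_nonneg (k : ι) : 0 ≤ w k * |x k| - u k * x k :=
    sub_nonneg.2 (mul_le_mul_abs_of_abs_le (hu k))
  have hslack : ∑ k, (w k * |x k| - u k * x k) = 0 := by
    have := sum_mul_abs_eq_add_sum_sub halign horth
    exact le_antisymm (by linarith) (Finset.sum_nonneg fun k _ => hslack_nonneg k)
  have hi_slack := (Finset.sum_eq_zero_iff_of_nonneg fun k _ => hslack_nonneg k).1 hslack i
    (Finset.mem_univ i)
  by_contra hx
  linarith [mul_lt_mul_abs_of_abs_lt hi hx]

end DualCertificate

section Projection

variable {m n : ℕ} (A : EuclideanSpace ℝ (Fin n) →ₗ[ℝ] EuclideanSpace ℝ (Fin m))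

theorem proj_mem_orthogonal_ker (x : EuclideanSpace ℝ (Fin n)) :
    proj A x ∈ (LinearMap.ker A)ᗮ :=
  (Submodule.orthogonalProjectionOnto _ x).2

theorem proj_apply (x : EuclideanSpace ℝ (Fin n)) (i : Fin n) :
    proj A x i = ⟪proj A x, proj A (stdBasis n i)⟫ := by
  rw [proj, proj, ← Submodule.coe_inner, Submodule.inner_orthogonalProjectionOnto_eq_of_mem_left,
    stdBasis, EuclideanSpace.inner_single_right]
  simp

theorem mem_ker_of_proj_eq_zero {x : EuclideanSpace ℝ (Fin n)} (hx : proj A x = 0) :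
    x ∈ LinearMap.ker A := by
  rw [proj, Submodule.coe_eq_zero, Submodule.orthogonalProjectionOnto_eq_zero_iff,
    Submodule.orthogonal_orthogonal] at hx
  exact hx

theorem proj_ne_zero {x : EuclideanSpace ℝ (Fin n)} (hx : x ∉ LinearMap.ker A) : proj A x ≠ 0 :=
  fun h => hx (mem_ker_of_proj_eq_zero A h)

theorem wgt_pos {i : Fin n} (hi : stdBasis n i ∉ LinearMap.ker A) : 0 < wgt A i :=
  norm_pos_iff.2 (proj_ne_zero A hi)

theorem proj_stdBasis_apply_self (i : Fin n) : proj A (stdBasis n i) i = wgt A i ^ 2 := by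
  rw [proj_apply, real_inner_self_eq_norm_sq, wgt]

theorem abs_proj_stdBasis_apply_lt (hA : ∀ i, stdBasis n i ∉ LinearMap.ker A) {i j : Fin n}
    (hNP : ∀ η : ℝ, A (stdBasis n i) ≠ η • A (stdBasis n j)) :
    |proj A (stdBasis n j) i| < wgt A j * wgt A i := by
  rw [proj_apply]
  refine (abs_real_inner_le_norm _ _).lt_of_ne fun heq => ?_
  obtain ⟨r, -, hr⟩ :=
    (norm_inner_eq_norm_iff (𝕜 := ℝ) (proj_ne_zero A (hA j)) (proj_ne_zero A (hA i))).1 heq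
  have hker : stdBasis n i - r • stdBasis n j ∈ LinearMap.ker A := by
    refine mem_ker_of_proj_eq_zero A ?_
    simp only [proj, map_sub, map_smul, Submodule.coe_sub, Submodule.coe_smul]
    exact sub_eq_zero.2 hr
  rw [LinearMap.mem_ker, map_sub, map_smul, sub_eq_zero] at hker
  exact hNP r hker

def DisjointProjSupports (x : EuclideanSpace ℝ (Fin n)) : Prop :=
  ∀ j k : Fin n, x j ≠ 0 → x k ≠ 0 → j ≠ k →
    ∀ i, proj A (stdBasis n j) i = 0 ∨ proj A (stdBasis n k) i = 0

/-- The sum runs over all `j`: the sign vanishes off the support of `x`. -/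
noncomputable def dualCert (x : EuclideanSpace ℝ (Fin n)) : EuclideanSpace ℝ (Fin n) :=
  ∑ j, (SignType.sign (x j) / wgt A j : ℝ) • proj A (stdBasis n j)

theorem dualCert_mem_orthogonal_ker (x : EuclideanSpace ℝ (Fin n)) :
    dualCert A x ∈ (LinearMap.ker A)ᗮ :=
  Submodule.sum_mem _ fun _ _ => Submodule.smul_mem _ _ (proj_mem_orthogonal_ker A _)

theorem dualCert_apply (x : EuclideanSpace ℝ (Fin n)) (i : Fin n) :
    dualCert A x i = ∑ j, SignType.sign (x j) / wgt A j * proj A (stdBasis n j) i := by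
  simp [dualCert]

variable {A} {x : EuclideanSpace ℝ (Fin n)}

theorem proj_stdBasis_apply_eq_zero (hA : ∀ i, stdBasis n i ∉ LinearMap.ker A)
    (hdisj : DisjointProjSupports A x) {i j : Fin n}
    (hi : x i ≠ 0) (hj : x j ≠ 0) (hij : i ≠ j) : proj A (stdBasis n j) i = 0 :=
  (hdisj j i hj hi hij.symm i).resolve_right <| by
    rw [proj_stdBasis_apply_self]; exact (pow_pos (wgt_pos A (hA i)) 2).ne'

theorem dualCert_apply_eq (hA : ∀ i, stdBasis n i ∉ LinearMap.ker A)
    (hdisj : DisjointProjSupports A x) {i j : Fin n} (hj : x j ≠ 0)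
    (hji : proj A (stdBasis n j) i ≠ 0) :
    dualCert A x i = SignType.sign (x j) / wgt A j * proj A (stdBasis n j) i := by
  rw [dualCert_apply]
  refine Finset.sum_eq_of_ne_zero_of_pairwise (fun k _ l _ hkl => ?_) (Finset.mem_univ j) ?_
  · by_cases hk : x k = 0
    · simp [hk]
    by_cases hl : x l = 0
    · simp [hl]
    rcases hdisj k l hk hl hkl i with h | h <;> simp [h]
  · have hs : (SignType.sign (x j) : ℝ) ≠ 0 := by rcases hj.lt_or_gt with h | h <;> simp [h]
    simp [hs, hji, (wgt_pos A (hA j)).ne']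

theorem dualCert_apply_of_ne_zero (hA : ∀ i, stdBasis n i ∉ LinearMap.ker A)
    (hdisj : DisjointProjSupports A x) {i : Fin n} (hi : x i ≠ 0) :
    dualCert A x i = SignType.sign (x i) * wgt A i := by
  have hw := (wgt_pos A (hA i)).ne'
  rw [dualCert_apply_eq hA hdisj hi, proj_stdBasis_apply_self]
  · field_simp
  · rw [proj_stdBasis_apply_self]; positivity

theorem abs_dualCert_apply_lt (hA : ∀ i, stdBasis n i ∉ LinearMap.ker A)
    (hNP : ∀ i j : Fin n, i ≠ j → ∀ η : ℝ, A (stdBasis n i) ≠ η • A (stdBasis n j))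
    (hdisj : DisjointProjSupports A x) {i : Fin n} (hi : x i = 0) :
    |dualCert A x i| < wgt A i := by
  by_cases h : ∃ j, x j ≠ 0 ∧ proj A (stdBasis n j) i ≠ 0
  · obtain ⟨j, hj, hji⟩ := h
    have hwj := wgt_pos A (hA j)
    have hij : i ≠ j := by rintro rfl; exact hj hi
    rw [dualCert_apply_eq hA hdisj hj hji, abs_mul, abs_div, abs_of_pos hwj]
    calc |(SignType.sign (x j) : ℝ)| / wgt A j * |proj A (stdBasis n j) i|
        ≤ 1 / wgt A j * |proj A (stdBasis n j) i| := by gcongr; exact SignType.abs_coe_le_one _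
      _ < 1 / wgt A j * (wgt A j * wgt A i) := by
        gcongr; exact abs_proj_stdBasis_apply_lt A hA (hNP i j hij)
      _ = wgt A i := by field_simp
  · push Not at h
    rw [dualCert_apply, Finset.sum_eq_zero fun j _ => ?_, abs_zero]
    · exact wgt_pos A (hA i)
    by_cases hj : x j = 0
    · simp [hj]
    · simp [h j hj]

theorem abs_dualCert_apply_le (hA : ∀ i, stdBasis n i ∉ LinearMap.ker A)
    (hNP : ∀ i j : Fin n, i ≠ j → ∀ η : ℝ, A (stdBasis n i) ≠ η • A (stdBasis n j))
    (hdisj : DisjointProjSupports A x) (i : Fin n) : |dualCert A x i| ≤ wgt A i := by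
  by_cases hi : x i = 0
  · exact (abs_dualCert_apply_lt hA hNP hdisj hi).le
  · rw [dualCert_apply_of_ne_zero hA hdisj hi, abs_mul, abs_of_pos (wgt_pos A (hA i))]
    exact mul_le_of_le_one_left (wgt_pos A (hA i)).le (SignType.abs_coe_le_one _)

theorem dualCert_apply_mul_self (hA : ∀ i, stdBasis n i ∉ LinearMap.ker A)
    (hdisj : DisjointProjSupports A x) (i : Fin n) : dualCert A x i * x i = wgt A i * |x i| := by
  by_cases hi : x i = 0
  · simp [hi]
  · rw [dualCert_apply_of_ne_zero hA hdisj hi, mul_right_comm, sign_mul_self, mul_comm]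

theorem eq_zero_of_mem_ker_of_apply_eq_zero (hA : ∀ i, stdBasis n i ∉ LinearMap.ker A)
    (hdisj : DisjointProjSupports A x) {h : EuclideanSpace ℝ (Fin n)} (hh : h ∈ LinearMap.ker A)
    (hsupp : ∀ i, x i = 0 → h i = 0) : h = 0 := by
  ext j
  by_cases hj : x j = 0
  · exact hsupp j hj
  have horth :=
    EuclideanSpace.sum_mul_eq_zero_of_mem_orthogonal (proj_mem_orthogonal_ker A (stdBasis n j)) hh
  rw [Finset.sum_eq_single_of_mem j (Finset.mem_univ j) fun i _ hij => ?_,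
    proj_stdBasis_apply_self] at horth
  · simpa [(wgt_pos A (hA j)).ne'] using horth
  by_cases hi : x i = 0
  · simp [hsupp i hi]
  · simp [proj_stdBasis_apply_eq_zero hA hdisj hi hj hij]

end Projection

theorem stmt2 {m n : ℕ}
    (A : EuclideanSpace ℝ (Fin n) →ₗ[ℝ] EuclideanSpace ℝ (Fin m))
    (hA : ∀ i, stdBasis n i ∉ LinearMap.ker A)
    (hNP : ∀ i j : Fin n, i ≠ j → ∀ η : ℝ, A (stdBasis n i) ≠ η • A (stdBasis n j))
    (xstar : EuclideanSpace ℝ (Fin n))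
    (hdisj : ∀ j k : Fin n, xstar j ≠ 0 → xstar k ≠ 0 → j ≠ k →
      ∀ i, proj A (stdBasis n j) i = 0 ∨ proj A (stdBasis n k) i = 0) :
    (∀ x : EuclideanSpace ℝ (Fin n), A x = A xstar → wl1 A xstar ≤ wl1 A x) ∧
      ∀ y : EuclideanSpace ℝ (Fin n), A y = A xstar →
        (∀ x : EuclideanSpace ℝ (Fin n), A x = A xstar → wl1 A y ≤ wl1 A x) → y = xstar := by
  have hu := abs_dualCert_apply_le hA hNP hdisj
  have halign := dualCert_apply_mul_self hA hdisj
  have hker {x : EuclideanSpace ℝ (Fin n)} (hx : A x = A xstar) : x - xstar ∈ LinearMap.ker A := by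
    rw [LinearMap.mem_ker, map_sub, hx, sub_self]
  have horth {x : EuclideanSpace ℝ (Fin n)} (hx : A x = A xstar) :
      ∑ i, dualCert A xstar i * (x i - xstar i) = 0 :=
    EuclideanSpace.sum_mul_eq_zero_of_mem_orthogonal (dualCert_mem_orthogonal_ker A xstar) (hker hx)
  refine ⟨fun x hx => sum_mul_abs_le_of_dual hu halign (horth hx), fun y hy hmin => ?_⟩
  have hoff (i : Fin n) (hi : xstar i = 0) : y i = 0 :=
    eq_zero_of_sum_mul_abs_le_of_dual hu halign (horth hy) (hmin xstar rfl)
      (abs_dualCert_apply_lt hA hNP hdisj hi)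
  refine sub_eq_zero.1 (eq_zero_of_mem_ker_of_apply_eq_zero hA hdisj (hker hy) fun i hi => ?_)
  simp [hoff i hi, hi]
end

section
/- Let x* ∈ ℝⁿ be a minimizer of the weighted ℓ1 norm ‖W x‖₁ = Σ_{i=1}^n w_i |x_i| subject to A x = A x*. If q ∈ ℝⁿ is a nonzero vector with A q = 0 and supp(q) ⊆ supp(x*), then there exists t̂ > 0 such that for every t ∈ [0, t̂] the vector x* + t q is also a minimizer of ‖W x‖₁ subject to A x = A x*; in particular the minimizer is not unique. -/
open scoped RealInnerProductSpace Classical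

/-!
Near `x*`, moving along a direction `q` supported in `supp x*` does not change the sign pattern of
`x*`, so `t ↦ ‖W (x* + t q)‖₁` is affine on a neighbourhood of `t = 0`, and these points are
feasible because `A q = 0`. An affine function with a local minimum at an interior point is
constant, so all points `x* + t q` with `t` small are minimizers as well.
-/

open Filter Topology

lemma abs_add_eq_abs_add_mul_sign {a c : ℝ} (h : |c| ≤ |a|) :
    |a + c| = |a| + c * Real.sign a := by
  rcases lt_trichotomy a 0 with ha | rfl | ha
  · rw [abs_of_neg ha] at h
    rw [Real.sign_of_neg ha, abs_of_neg ha, abs_of_nonpos (by linarith [le_abs_self c])]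
    ring
  · simp [show c = 0 by simpa using h]
  · rw [abs_of_pos ha] at h
    rw [Real.sign_of_pos ha, abs_of_pos ha, abs_of_nonneg (by linarith [neg_abs_le c])]
    ring

section WeightedL1

variable {ι : Type*} [Fintype ι]

lemma eventually_abs_mul_le_abs {x q : ι → ℝ} (hsupp : ∀ i, q i ≠ 0 → x i ≠ 0) :
    ∀ᶠ t in 𝓝 (0 : ℝ), ∀ i, |t * q i| ≤ |x i| := by
  refine eventually_all.2 fun i => ?_
  by_cases hq : q i = 0
  · simp [hq]
  have hcont : Continuous fun t : ℝ => |t * q i| := by fun_prop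
  have hlt : |(0 : ℝ) * q i| < |x i| := by simpa using hsupp i hq
  exact (hcont.continuousAt.eventually_lt continuousAt_const hlt).mono fun _ => le_of_lt

lemma eventually_sum_mul_abs_add_mul (w : ι → ℝ) {x q : ι → ℝ}
    (hsupp : ∀ i, q i ≠ 0 → x i ≠ 0) :
    ∀ᶠ t in 𝓝 (0 : ℝ), ∑ i, w i * |x i + t * q i| =
      ∑ i, w i * |x i| + t * ∑ i, w i * (q i * Real.sign (x i)) := by
  filter_upwards [eventually_abs_mul_le_abs hsupp] with t ht
  simp only [abs_add_eq_abs_add_mul_sign (ht _), Finset.mul_sum, ← Finset.sum_add_distrib]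
  exact Finset.sum_congr rfl fun i _ => by ring

end WeightedL1

lemma IsLocalMin.eventually_eq_of_eventually_affine {g : ℝ → ℝ} {c : ℝ} (hmin : IsLocalMin g 0)
    (haff : ∀ᶠ t in 𝓝 0, g t = g 0 + t * c) : ∀ᶠ t in 𝓝 0, g t = g 0 := by
  have hderiv : HasDerivAt g c 0 :=
    ((hasDerivAt_mul_const c).const_add (g 0)).congr_of_eventuallyEq haff
  filter_upwards [haff] with t ht
  rw [ht, hmin.hasDerivAt_eq_zero hderiv, mul_zero, add_zero]

theorem stmt14_general {m n : ℕ}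
    (A : EuclideanSpace ℝ (Fin n) →ₗ[ℝ] EuclideanSpace ℝ (Fin m))
    (xstar : EuclideanSpace ℝ (Fin n))
    (hmin : ∀ x : EuclideanSpace ℝ (Fin n), A x = A xstar → wl1 A xstar ≤ wl1 A x)
    (q : EuclideanSpace ℝ (Fin n)) (hAq : A q = 0)
    (hsupp : ∀ i, q i ≠ 0 → xstar i ≠ 0) :
    ∃ that : ℝ, 0 < that ∧ ∀ t ∈ Set.Icc (0 : ℝ) that,
      A (xstar + t • q) = A xstar ∧
      ∀ x : EuclideanSpace ℝ (Fin n), A x = A xstar → wl1 A (xstar + t • q) ≤ wl1 A x := by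
  set g : ℝ → ℝ := fun t => wl1 A (xstar + t • q)
  have hfeas : ∀ t : ℝ, A (xstar + t • q) = A xstar := by simp [hAq]
  have hgmin : IsLocalMin g 0 :=
    Eventually.of_forall fun t => by simpa [g] using hmin _ (hfeas t)
  have haff : ∀ᶠ t in 𝓝 0, g t = g 0 + t * ∑ i, wgt A i * (q i * Real.sign (xstar i)) := by
    simpa [g, wl1] using eventually_sum_mul_abs_add_mul (wgt A) hsupp
  obtain ⟨ε, hε, hconst⟩ :=
    Metric.eventually_nhds_iff.1 (hgmin.eventually_eq_of_eventually_affine haff)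
  refine ⟨ε / 2, half_pos hε, fun t ht => ⟨hfeas t, fun x hx => ?_⟩⟩
  have hdist : dist t 0 < ε := by
    rw [Real.dist_0_eq_abs, abs_of_nonneg ht.1]
    linarith [ht.2]
  calc wl1 A (xstar + t • q) = g t := rfl
    _ = wl1 A xstar := by simpa [g] using hconst hdist
    _ ≤ wl1 A x := hmin x hx

theorem stmt14 {m n : ℕ}
    (A : EuclideanSpace ℝ (Fin n) →ₗ[ℝ] EuclideanSpace ℝ (Fin m))
    (hA : ∀ i, stdBasis n i ∉ LinearMap.ker A)
    (xstar : EuclideanSpace ℝ (Fin n))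
    (hmin : ∀ x : EuclideanSpace ℝ (Fin n), A x = A xstar → wl1 A xstar ≤ wl1 A x)
    (q : EuclideanSpace ℝ (Fin n)) (hq : q ≠ 0) (hAq : A q = 0)
    (hsupp : ∀ i, q i ≠ 0 → xstar i ≠ 0) :
    ∃ that : ℝ, 0 < that ∧ ∀ t ∈ Set.Icc (0 : ℝ) that,
      A (xstar + t • q) = A xstar ∧
      ∀ x : EuclideanSpace ℝ (Fin n), A x = A xstar → wl1 A (xstar + t • q) ≤ wl1 A x :=
  stmt14_general A xstar hmin q hAq hsupp
end
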